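/- arXiv:1103.3281 — 3 statements merged into one kernel-verified Lean document; each statement's English description precedes it below -/
import Mathlib

section
/- Let G = (V,E) be a countable locally finite network in which every local measure μ_i is Rayleigh and satisfies μ_i(∅) > 0, and fix t > 0. Define x⁰ ≡ 0 and x^{k+1} := tΓ_G(x^k) for k ∈ ℕ. Then the even iterates x^{2k} are coordinatewise nondecreasing in k and the odd iterates x^{2k+1} are coordinatewise nonincreasing, so the coordinatewise limits x⁻(t) = lim_k x^{2k} and x⁺(t) = lim_k x^{2k+1} exist; moreover tΓ_G(x⁻(t)) = x⁺(t), tΓ_G(x⁺(t)) = x⁻(t), and every fixed point x = tΓ_G(x) with x ∈ [0,∞)^{Ē} satisfies x⁻(t) ≤ x ≤ x⁺(t) coordinatewise. -/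
/-!
In a single coordinate `f`, the cavity ratio `Γ^e` of a local measure is a Möbius function
`c ↦ (N₀ + c N₁) / (D₀ + c D₁)`, and negative correlation of `e` and `f` (the Rayleigh
property) is exactly `N₁ D₀ ≤ N₀ D₁`; so `Γ^e` is antitone in the field. Hence `T = tΓ_G` is
antitone on nonnegative configurations and `T ∘ T` is monotone there. Starting from the least
configuration `0`, the even iterates increase, the odd ones decrease, and every nonnegative
fixed point stays between them; the bounded monotone sequences converge coordinatewise, and
continuity of `T` turns the two limits into a `2`-cycle of `T`.
-/

open Finset Filter
open scoped Classical ENNReal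

section LocalDefs

variable {V : Type*} [DecidableEq V]

/-- Generating polynomial `Z(w) = Σ_{S ⊆ A} ν(S) ∏_{k∈S} w_k` of a measure `ν`
on the subsets of the ground set `A`. -/
noncomputable def lZ (A : Finset V) (ν : Finset V → ℝ) (w : V → ℝ) : ℝ :=
  ∑ S ∈ A.powerset, ν S * ∏ k ∈ S, w k

/-- Gibbs--Boltzmann probability of the event `p` under external field `w`. -/
noncomputable def lProb (A : Finset V) (ν : Finset V → ℝ) (w : V → ℝ)
    (p : Finset V → Prop) : ℝ :=
  (∑ S ∈ A.powerset.filter p, ν S * ∏ k ∈ S, w k) / lZ A ν w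

/-- The energy `U_ν(w)`, i.e. the expected cardinality of the random subset. -/
noncomputable def lEnergy (A : Finset V) (ν : Finset V → ℝ) (w : V → ℝ) : ℝ :=
  (∑ S ∈ A.powerset, (S.card : ℝ) * ν S * ∏ k ∈ S, w k) / lZ A ν w

/-- `E^w_ν[|𝓕|·1_{e∈𝓕}]`. -/
noncomputable def lEnergyIn (A : Finset V) (ν : Finset V → ℝ) (e : V) (w : V → ℝ) : ℝ :=
  (∑ S ∈ A.powerset.filter (fun S => e ∈ S), (S.card : ℝ) * ν S * ∏ k ∈ S, w k) / lZ A ν w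

/-- The cavity ratio `Γ^e_ν(w') = Z^{/e}(w') / Z^{∖e}(w')`; it only depends on the
coordinates of `w` different from `e`. -/
noncomputable def lGamma (A : Finset V) (ν : Finset V → ℝ) (e : V) (w : V → ℝ) : ℝ :=
  (∑ S ∈ (A.erase e).powerset, ν (insert e S) * ∏ k ∈ S, w k) /
  (∑ S ∈ (A.erase e).powerset, ν S * ∏ k ∈ S, w k)

/-- Rayleigh property: pairwise negative correlation under every positive external field. -/
def lRayleigh (A : Finset V) (ν : Finset V → ℝ) : Prop :=
  ∀ w : V → ℝ, (∀ k ∈ A, 0 < w k) → ∀ e ∈ A, ∀ f ∈ A, e ≠ f →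
    lProb A ν w (fun S => e ∈ S ∧ f ∈ S) ≤
      lProb A ν w (fun S => e ∈ S) * lProb A ν w (fun S => f ∈ S)

/-- Size-increasing property: every ground element positively influences the total size. -/
def lSizeInc (A : Finset V) (ν : Finset V → ℝ) : Prop :=
  ∀ w : V → ℝ, (∀ k ∈ A, 0 < w k) → ∀ e ∈ A,
    lEnergy A ν w * lProb A ν w (fun S => e ∈ S) < lEnergyIn A ν e w

/-- Cavity-monotone: nonnegative, `ν(∅) > 0`, Rayleigh and size-increasing. -/
def lCavityMonotone (A : Finset V) (ν : Finset V → ℝ) : Prop :=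
  (∀ S ∈ A.powerset, 0 ≤ ν S) ∧ 0 < ν ∅ ∧ lRayleigh A ν ∧ lSizeInc A ν

end LocalDefs

section NetworkDefs

variable {V : Type*} [DecidableEq V]

/-- The cavity operator: `(Γ_G x)_{i→j}` is the cavity ratio of the local measure `μ i`
at the edge `ij`, with external field `(x_{k→i} : k ∈ ∂i ∖ {j})`.  Local measures are
encoded as functions of the set of neighbours selected. -/
noncomputable def cavOp (G : SimpleGraph V) [G.LocallyFinite]
    (μ : V → Finset V → ℝ) (x : V → V → ℝ) (i j : V) : ℝ :=
  (∑ S ∈ ((G.neighborFinset i).erase j).powerset, μ i (insert j S) * ∏ k ∈ S, x k i) /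
  (∑ S ∈ ((G.neighborFinset i).erase j).powerset, μ i S * ∏ k ∈ S, x k i)

/-- One step of the cavity iteration at activity `t` : `x ↦ t Γ_G(x)`. -/
noncomputable def cavStep (G : SimpleGraph V) [G.LocallyFinite]
    (μ : V → Finset V → ℝ) (t : ℝ) (x : V → V → ℝ) : V → V → ℝ :=
  fun i j => t * cavOp G μ x i j

/-- The neighbours `k` of `i` such that the edge `ik` belongs to the spanning subgraph `F`;
this encodes `F ∩ E_i` as a set of neighbours. -/
noncomputable def nbrsIn (G : SimpleGraph V) [G.LocallyFinite]
    (F : Finset (Sym2 V)) (i : V) : Finset V :=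
  (G.neighborFinset i).filter (fun k => s(i, k) ∈ F)

variable [Fintype V]

/-- Global measure `μ(F) = ∏_i μ_i(F ∩ E_i)` of a spanning subgraph `F`. -/
noncomputable def gWeight (G : SimpleGraph V) [DecidableRel G.Adj]
    (μ : V → Finset V → ℝ) (F : Finset (Sym2 V)) : ℝ :=
  ∏ i : V, μ i (nbrsIn G F i)

/-- Partition function `Z(G;t) = Σ_{F ⊆ E} μ(F) t^{|F|}`. -/
noncomputable def ZG (G : SimpleGraph V) [DecidableRel G.Adj]
    (μ : V → Finset V → ℝ) (t : ℝ) : ℝ :=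
  ∑ F ∈ G.edgeFinset.powerset, gWeight G μ F * t ^ F.card

/-- Gibbs--Boltzmann probability of the event `p` at activity `t`. -/
noncomputable def gProb (G : SimpleGraph V) [DecidableRel G.Adj]
    (μ : V → Finset V → ℝ) (t : ℝ) (p : Finset (Sym2 V) → Prop) : ℝ :=
  (∑ F ∈ G.edgeFinset.powerset.filter p, gWeight G μ F * t ^ F.card) / ZG G μ t

/-- Energy `U(G;t)`, the expected size of the random spanning subgraph. -/
noncomputable def UG (G : SimpleGraph V) [DecidableRel G.Adj]
    (μ : V → Finset V → ℝ) (t : ℝ) : ℝ :=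
  (∑ F ∈ G.edgeFinset.powerset, (F.card : ℝ) * gWeight G μ F * t ^ F.card) / ZG G μ t

/-- `M(G)`, the maximum size of a spanning subgraph with positive weight. -/
noncomputable def MG (G : SimpleGraph V) [DecidableRel G.Adj]
    (μ : V → Finset V → ℝ) : ℕ :=
  (G.edgeFinset.powerset.filter (fun F => 0 < gWeight G μ F)).sup Finset.card

end NetworkDefs

section GeneratingPolynomial

variable {V : Type*} {A : Finset V} {ν : Finset V → ℝ} {e : V}
  {w w' : V → ℝ}

lemma lZ_congr (h : ∀ k ∈ A, w k = w' k) : lZ A ν w = lZ A ν w' :=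
  sum_congr rfl fun S hS => by rw [prod_congr rfl fun k hk => h k (mem_powerset.mp hS hk)]

lemma lZ_nonneg (hν : ∀ S ∈ A.powerset, 0 ≤ ν S) (hw : ∀ k ∈ A, 0 ≤ w k) :
    0 ≤ lZ A ν w :=
  sum_nonneg fun S hS =>
    mul_nonneg (hν S hS) (prod_nonneg fun k hk => hw k (mem_powerset.mp hS hk))

lemma lZ_pos (hν : ∀ S ∈ A.powerset, 0 ≤ ν S) (h0 : 0 < ν ∅) (hw : ∀ k ∈ A, 0 ≤ w k) :
    0 < lZ A ν w := by
  have hterm : ν ∅ * ∏ k ∈ (∅ : Finset V), w k ≤ lZ A ν w :=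
    single_le_sum (fun S hS =>
      mul_nonneg (hν S hS) (prod_nonneg fun k hk => hw k (mem_powerset.mp hS hk)))
      (empty_mem_powerset A)
  rw [prod_empty, mul_one] at hterm
  exact h0.trans_le hterm

lemma lProb_eq (A : Finset V) (ν : Finset V → ℝ) (w : V → ℝ) (p : Finset V → Prop)
    [DecidablePred p] :
    lProb A ν w p = lZ A (fun S => if p S then ν S else 0) w / lZ A ν w := by
  unfold lProb lZ
  rw [sum_filter]
  simp only [ite_mul, zero_mul]
  convert rfl

variable [DecidableEq V]

lemma lZ_eq_lZ_erase_add (he : e ∈ A) (ν : Finset V → ℝ) (w : V → ℝ) :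
    lZ A ν w = lZ (A.erase e) ν w + w e * lZ (A.erase e) (fun S => ν (insert e S)) w := by
  unfold lZ
  conv_lhs => rw [← insert_erase he]
  rw [sum_powerset_insert (notMem_erase e A), mul_sum]
  congr 1
  refine sum_congr rfl fun S hS => ?_
  rw [prod_insert fun h => notMem_erase e A (mem_powerset.mp hS h)]
  ring

lemma lZ_ite_mem (he : e ∈ A) (ν : Finset V → ℝ) (w : V → ℝ) :
    lZ A (fun S => if e ∈ S then ν S else 0) w
      = w e * lZ (A.erase e) (fun S => ν (insert e S)) w := by
  have hout : lZ (A.erase e) (fun S => if e ∈ S then ν S else 0) w = 0 :=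
    sum_eq_zero fun S hS => by
      dsimp only
      rw [if_neg fun h => notMem_erase e A (mem_powerset.mp hS h), zero_mul]
  rw [lZ_eq_lZ_erase_add he, hout, zero_add]
  simp only [mem_insert_self, if_true]

end GeneratingPolynomial

section Rayleigh

variable {V : Type*} [DecidableEq V] {A : Finset V} {ν : Finset V → ℝ} {e f : V}
  {w : V → ℝ}

theorem lRayleigh.lZ_contract_contract_mul_le_of_pos (hr : lRayleigh A ν)
    (hν : ∀ S ∈ A.powerset, 0 ≤ ν S) (h0 : 0 < ν ∅) (he : e ∈ A) (hf : f ∈ A) (hef : e ≠ f)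
    (hw : ∀ k ∈ A, 0 < w k) :
    lZ ((A.erase e).erase f) (fun S => ν (insert e (insert f S))) w *
        lZ ((A.erase e).erase f) ν w ≤
      lZ ((A.erase e).erase f) (fun S => ν (insert e S)) w *
        lZ ((A.erase e).erase f) (fun S => ν (insert f S)) w := by
  have hfe : f ∈ A.erase e := mem_erase.mpr ⟨hef.symm, hf⟩
  have hef' : e ∈ A.erase f := mem_erase.mpr ⟨hef, he⟩
  set Z₀ := lZ ((A.erase e).erase f) ν w
  set Ze := lZ ((A.erase e).erase f) (fun S => ν (insert e S)) w
  set Zf := lZ ((A.erase e).erase f) (fun S => ν (insert f S)) w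
  set Zef := lZ ((A.erase e).erase f) (fun S => ν (insert e (insert f S))) w
  have hZ : lZ A ν w = Z₀ + w f * Zf + w e * (Ze + w f * Zef) := by
    rw [lZ_eq_lZ_erase_add he, lZ_eq_lZ_erase_add hfe, lZ_eq_lZ_erase_add hfe]
  have hPe : lZ A (fun S => if e ∈ S then ν S else 0) w = w e * (Ze + w f * Zef) := by
    rw [lZ_ite_mem he, lZ_eq_lZ_erase_add hfe]
  have hPf : lZ A (fun S => if f ∈ S then ν S else 0) w = w f * (Zf + w e * Zef) := by
    rw [lZ_ite_mem hf, lZ_eq_lZ_erase_add hef', erase_right_comm]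
    simp only [insert_comm f e, Zf, Zef]
  have hPef : lZ A (fun S => if e ∈ S ∧ f ∈ S then ν S else 0) w = w e * (w f * Zef) := by
    simp only [ite_and]
    rw [lZ_ite_mem he]
    simp only [mem_insert, hef.symm, false_or]
    rw [lZ_ite_mem hfe]
  have hZpos : 0 < lZ A ν w := lZ_pos hν h0 fun k hk => (hw k hk).le
  have hray := hr w hw e he f hf hef
  rw [lProb_eq, lProb_eq, lProb_eq, div_mul_div_comm, div_le_div_iff₀ hZpos
    (mul_pos hZpos hZpos), ← mul_assoc, mul_le_mul_iff_left₀ hZpos, hZ, hPe, hPf, hPef] at hray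
  have hwef : 0 < w e * w f := mul_pos (hw e he) (hw f hf)
  refine le_of_mul_le_mul_left ?_ hwef
  -- `Pe * Pf - Pef * Z = w e * w f * (Ze * Zf - Zef * Z₀)`
  linear_combination hray

theorem lRayleigh.lZ_contract_contract_mul_le (hr : lRayleigh A ν)
    (hν : ∀ S ∈ A.powerset, 0 ≤ ν S) (h0 : 0 < ν ∅) (he : e ∈ A) (hf : f ∈ A) (hef : e ≠ f)
    (hw : ∀ k ∈ (A.erase e).erase f, 0 ≤ w k) :
    lZ ((A.erase e).erase f) (fun S => ν (insert e (insert f S))) w *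
        lZ ((A.erase e).erase f) ν w ≤
      lZ ((A.erase e).erase f) (fun S => ν (insert e S)) w *
        lZ ((A.erase e).erase f) (fun S => ν (insert f S)) w := by
  set B := (A.erase e).erase f
  -- the inequality holds at the positive fields `|w| + ε` and passes to the limit `ε → 0⁺`
  let u : ℝ → V → ℝ := fun ε k => |w k| + ε
  have hu0 : ∀ g, lZ B g (u 0) = lZ B g w := fun g =>
    lZ_congr fun k hk => by simp [u, abs_of_nonneg (hw k hk)]
  have hcont : ∀ g, Continuous fun ε => lZ B g (u ε) := fun g => by
    unfold lZ u; fun_prop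
  have hgap : Continuous fun ε => lZ B (fun S => ν (insert e S)) (u ε) *
      lZ B (fun S => ν (insert f S)) (u ε) -
        lZ B (fun S => ν (insert e (insert f S))) (u ε) * lZ B ν (u ε) := by
    fun_prop
  have hpos : ∀ ε > 0, 0 ≤ lZ B (fun S => ν (insert e S)) (u ε) *
      lZ B (fun S => ν (insert f S)) (u ε) -
        lZ B (fun S => ν (insert e (insert f S))) (u ε) * lZ B ν (u ε) := fun ε hε =>
    sub_nonneg.mpr (hr.lZ_contract_contract_mul_le_of_pos hν h0 he hf hef fun k _ =>
      add_pos_of_nonneg_of_pos (abs_nonneg _) hε)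
  have := ge_of_tendsto ((hgap.tendsto 0).mono_left nhdsWithin_le_nhds)
    (eventually_nhdsWithin_of_forall (s := Set.Ioi 0) hpos)
  simpa only [hu0, sub_nonneg] using this

end Rayleigh

section CavityRatio

variable {V : Type*} [DecidableEq V] {A : Finset V} {ν : Finset V → ℝ} {e f : V}
  {w w' : V → ℝ}

lemma lGamma_eq (A : Finset V) (ν : Finset V → ℝ) (e : V) (w : V → ℝ) :
    lGamma A ν e w = lZ (A.erase e) (fun S => ν (insert e S)) w / lZ (A.erase e) ν w :=
  rfl

lemma lGamma_congr (h : ∀ k ∈ A.erase e, w k = w' k) : lGamma A ν e w = lGamma A ν e w' := by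
  rw [lGamma_eq, lGamma_eq, lZ_congr h, lZ_congr h]

lemma lGamma_nonneg (hν : ∀ S ∈ A.powerset, 0 ≤ ν S) (he : e ∈ A)
    (hw : ∀ k ∈ A.erase e, 0 ≤ w k) : 0 ≤ lGamma A ν e w := by
  have hsub : ∀ S ∈ (A.erase e).powerset, S ⊆ A := fun S hS =>
    (mem_powerset.mp hS).trans (erase_subset e A)
  exact div_nonneg
    (lZ_nonneg (fun S hS => hν _ (mem_powerset.mpr (insert_subset he (hsub S hS)))) hw)
    (lZ_nonneg (fun S hS => hν _ (mem_powerset.mpr (hsub S hS))) hw)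

theorem lRayleigh.lGamma_update_le (hr : lRayleigh A ν) (hν : ∀ S ∈ A.powerset, 0 ≤ ν S)
    (h0 : 0 < ν ∅) (he : e ∈ A) (hf : f ∈ A.erase e) (hw : ∀ k ∈ A.erase e, 0 ≤ w k)
    {c c' : ℝ} (hc : 0 ≤ c) (hcc : c ≤ c') :
    lGamma A ν e (Function.update w f c') ≤ lGamma A ν e (Function.update w f c) := by
  set B := (A.erase e).erase f
  have hfA : f ∈ A := mem_of_mem_erase hf
  have hfe : e ≠ f := fun h => (mem_erase.mp hf).1 h.symm
  have hwB : ∀ k ∈ B, 0 ≤ w k := fun k hk => hw k (mem_of_mem_erase hk)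
  have hsub : ∀ S ∈ B.powerset, S ⊆ A := fun S hS =>
    (mem_powerset.mp hS).trans ((erase_subset f _).trans (erase_subset e A))
  have hsplit : ∀ (g : Finset V → ℝ) (d : ℝ), lZ (A.erase e) g (Function.update w f d) =
      lZ B g w + d * lZ B (fun S => g (insert f S)) w := fun g d => by
    have hw' : ∀ k ∈ B, Function.update w f d k = w k := fun k hk =>
      Function.update_of_ne (mem_erase.mp hk).1 d w
    rw [lZ_eq_lZ_erase_add hf, Function.update_self, lZ_congr hw', lZ_congr hw']
  have hkey := hr.lZ_contract_contract_mul_le hν h0 he hfA hfe hwB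
  have hZ₀ : 0 < lZ B ν w :=
    lZ_pos (fun S hS => hν _ (mem_powerset.mpr (hsub S hS))) h0 hwB
  have hZf : 0 ≤ lZ B (fun S => ν (insert f S)) w :=
    lZ_nonneg (fun S hS => hν _ (mem_powerset.mpr (insert_subset hfA (hsub S hS)))) hwB
  rw [lGamma_eq, lGamma_eq, hsplit, hsplit, hsplit, hsplit,
    div_le_div_iff₀ (by positivity [mul_nonneg (hc.trans hcc) hZf]) (by positivity)]
  -- the cross-multiplied difference is `(c' - c) * (Ze * Zf - Zef * Z₀) ≥ 0`
  nlinarith [mul_nonneg (sub_nonneg.mpr hcc) (sub_nonneg.mpr hkey)]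

theorem lRayleigh.lGamma_antitone (hr : lRayleigh A ν) (hν : ∀ S ∈ A.powerset, 0 ≤ ν S)
    (h0 : 0 < ν ∅) (he : e ∈ A) (hw : ∀ k ∈ A.erase e, 0 ≤ w k ∧ w k ≤ w' k) :
    lGamma A ν e w' ≤ lGamma A ν e w := by
  suffices h : ∀ T ⊆ A.erase e, lGamma A ν e (T.piecewise w' w) ≤ lGamma A ν e w by
    exact (lGamma_congr fun k hk => (piecewise_eq_of_mem _ _ _ hk).symm).trans_le
      (h _ subset_rfl)
  intro T
  induction T using Finset.induction_on with
  | empty => simp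
  | insert a T ha ih =>
    intro hT
    have haA : a ∈ A.erase e := hT (mem_insert_self a T)
    have hTw : ∀ k ∈ A.erase e, 0 ≤ T.piecewise w' w k := fun k hk => by
      by_cases hkT : k ∈ T
      · rw [piecewise_eq_of_mem _ _ _ hkT]; exact (hw k hk).1.trans (hw k hk).2
      · rw [piecewise_eq_of_notMem _ _ _ hkT]; exact (hw k hk).1
    calc lGamma A ν e ((insert a T).piecewise w' w)
        = lGamma A ν e (Function.update (T.piecewise w' w) a (w' a)) := by
          rw [piecewise_insert]
      _ ≤ lGamma A ν e (Function.update (T.piecewise w' w) a (w a)) :=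
          hr.lGamma_update_le hν h0 he haA hTw (hw a haA).1 (hw a haA).2
      _ = lGamma A ν e (T.piecewise w' w) := by
          rw [Function.update_eq_self_iff.mpr (piecewise_eq_of_notMem _ _ _ ha).symm]
      _ ≤ lGamma A ν e w := ih ((subset_insert a T).trans hT)

end CavityRatio

namespace AntitoneOn

open Function Set
open scoped Topology

section Preorder

variable {α : Type*} [Preorder α] {T : α → α} {s : Set α} {x₀ z : α}

theorem monotone_iterate_two_mul (hT : AntitoneOn T s) (hs : MapsTo T s s)
    (h₀ : IsLeast s x₀) : Monotone fun k => T^[2 * k] x₀ := by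
  have hT2 : MonotoneOn (T ∘ T) s := hT.comp hT hs
  have hstep : ∀ k, T^[2 * (k + 1)] x₀ = (T ∘ T) (T^[2 * k] x₀) := fun k => by
    rw [show 2 * (k + 1) = 2 * k + 1 + 1 by ring, iterate_succ_apply', iterate_succ_apply',
      comp_apply]
  refine monotone_nat_of_le_succ fun k => ?_
  induction k with
  | zero => exact h₀.2 (hs.iterate 2 h₀.1)
  | succ k ih =>
    calc T^[2 * (k + 1)] x₀ = (T ∘ T) (T^[2 * k] x₀) := hstep k
      _ ≤ (T ∘ T) (T^[2 * (k + 1)] x₀) := hT2 (hs.iterate _ h₀.1) (hs.iterate _ h₀.1) ih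
      _ = T^[2 * (k + 1 + 1)] x₀ := (hstep _).symm

theorem antitone_iterate_two_mul_add_one (hT : AntitoneOn T s) (hs : MapsTo T s s)
    (h₀ : IsLeast s x₀) : Antitone fun k => T^[2 * k + 1] x₀ := fun a b hab => by
  simp only [iterate_succ_apply']
  exact hT (hs.iterate _ h₀.1) (hs.iterate _ h₀.1) (hT.monotone_iterate_two_mul hs h₀ hab)

theorem iterate_le_map (hT : AntitoneOn T s) (hs : MapsTo T s s) (h₀ : IsLeast s x₀) :
    ∀ n, T^[n] x₀ ≤ T x₀
  | 0 => h₀.2 (hs h₀.1)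
  | n + 1 => by
    rw [iterate_succ_apply']
    exact hT h₀.1 (hs.iterate n h₀.1) (h₀.2 (hs.iterate n h₀.1))

theorem iterate_two_mul_le_and_le_iterate_of_isFixedPt (hT : AntitoneOn T s)
    (hs : MapsTo T s s) (h₀ : IsLeast s x₀) (hz : z ∈ s) (hfix : IsFixedPt T z) (k : ℕ) :
    T^[2 * k] x₀ ≤ z ∧ z ≤ T^[2 * k + 1] x₀ := by
  have hodd : ∀ k, T^[2 * k] x₀ ≤ z → z ≤ T^[2 * k + 1] x₀ := fun k h => by
    rw [iterate_succ_apply', ← hfix.eq]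
    exact hT (hs.iterate _ h₀.1) hz h
  induction k with
  | zero => exact ⟨h₀.2 hz, hodd 0 (h₀.2 hz)⟩
  | succ k ih =>
    have heven : T^[2 * (k + 1)] x₀ ≤ z := by
      rw [show 2 * (k + 1) = 2 * k + 1 + 1 by ring, iterate_succ_apply', ← hfix.eq]
      exact hT hz (hs.iterate _ h₀.1) ih.2
    exact ⟨heven, hodd _ heven⟩

end Preorder

variable {α : Type*} [ConditionallyCompleteLattice α] [TopologicalSpace α] [T2Space α]
  [SupConvergenceClass α] [InfConvergenceClass α] {T : α → α} {s : Set α} {x₀ : α}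

theorem exists_tendsto_iterate (hT : AntitoneOn T s) (hs : MapsTo T s s)
    (h₀ : IsLeast s x₀) (hsc : IsClosed s) (hcont : ContinuousOn T s) :
    ∃ xm xp : α,
      Monotone (fun k => T^[2 * k] x₀) ∧ Antitone (fun k => T^[2 * k + 1] x₀) ∧
      Tendsto (fun k => T^[2 * k] x₀) atTop (𝓝 xm) ∧
      Tendsto (fun k => T^[2 * k + 1] x₀) atTop (𝓝 xp) ∧
      T xm = xp ∧ T xp = xm ∧ ∀ z ∈ s, IsFixedPt T z → xm ≤ z ∧ z ≤ xp := by
  have hmem : ∀ n, T^[n] x₀ ∈ s := fun n => hs.iterate n h₀.1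
  have hmono := hT.monotone_iterate_two_mul hs h₀
  have hanti := hT.antitone_iterate_two_mul_add_one hs h₀
  have hm := tendsto_atTop_ciSup hmono ⟨T x₀, forall_mem_range.mpr fun _ =>
    hT.iterate_le_map hs h₀ _⟩
  have hp := tendsto_atTop_ciInf hanti ⟨x₀, forall_mem_range.mpr fun _ => h₀.2 (hmem _)⟩
  have hxm := hsc.mem_of_tendsto hm (Eventually.of_forall fun _ => hmem _)
  have hxp := hsc.mem_of_tendsto hp (Eventually.of_forall fun _ => hmem _)
  have hTm : Tendsto (fun k => T^[2 * k + 1] x₀) atTop (𝓝 (T (⨆ k, T^[2 * k] x₀))) :=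
    ((hcont _ hxm).tendsto.comp (tendsto_nhdsWithin_iff.mpr
      ⟨hm, Eventually.of_forall fun _ => hmem _⟩)).congr fun _ => (iterate_succ_apply' T _ _).symm
  have hTp : Tendsto (fun k => T^[2 * (k + 1)] x₀) atTop (𝓝 (T (⨅ k, T^[2 * k + 1] x₀))) :=
    ((hcont _ hxp).tendsto.comp (tendsto_nhdsWithin_iff.mpr
      ⟨hp, Eventually.of_forall fun _ => hmem _⟩)).congr fun _ => (iterate_succ_apply' T _ _).symm
  refine ⟨_, _, hmono, hanti, hm, hp, tendsto_nhds_unique hTm hp,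
    tendsto_nhds_unique hTp (hm.comp (tendsto_add_atTop_nat 1)), fun z hz hfix => ?_⟩
  have hsand := hT.iterate_two_mul_le_and_le_iterate_of_isFixedPt hs h₀ hz hfix
  exact ⟨ciSup_le fun k => (hsand k).1, le_ciInf fun k => (hsand k).2⟩

end AntitoneOn

section CavityOperator

variable {V : Type*} [DecidableEq V] (G : SimpleGraph V) [G.LocallyFinite]
  (μ : V → Finset V → ℝ) {x y : V → V → ℝ} {i j : V}

lemma SimpleGraph.adj_of_mem_erase_neighborFinset {k : V} (hk : k ∈ (G.neighborFinset i).erase j) :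
    G.Adj k i :=
  ((G.mem_neighborFinset i k).mp (mem_of_mem_erase hk)).symm

lemma cavOp_congr (h : ∀ k, G.Adj k i → x k i = y k i) : cavOp G μ x i j = cavOp G μ y i j :=
  lGamma_congr fun k hk => h k (G.adj_of_mem_erase_neighborFinset hk)

lemma cavOp_nonneg (hnn : ∀ S ∈ (G.neighborFinset i).powerset, 0 ≤ μ i S) (hij : G.Adj i j)
    (hx : ∀ k, G.Adj k i → 0 ≤ x k i) : 0 ≤ cavOp G μ x i j :=
  lGamma_nonneg hnn ((G.mem_neighborFinset i j).mpr hij) fun k hk =>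
    hx k (G.adj_of_mem_erase_neighborFinset hk)

lemma cavOp_antitone (hnn : ∀ S ∈ (G.neighborFinset i).powerset, 0 ≤ μ i S)
    (h0 : 0 < μ i ∅) (hray : lRayleigh (G.neighborFinset i) (μ i)) (hij : G.Adj i j)
    (hxy : ∀ k, G.Adj k i → 0 ≤ x k i ∧ x k i ≤ y k i) : cavOp G μ y i j ≤ cavOp G μ x i j :=
  hray.lGamma_antitone hnn h0 ((G.mem_neighborFinset i j).mpr hij) fun k hk =>
    hxy k (G.adj_of_mem_erase_neighborFinset hk)

end CavityOperator

section Darts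

variable {V : Type*} (G : SimpleGraph V)

def restrictToDarts (x : V → V → ℝ) : G.Dart → ℝ := fun d => x d.fst d.snd

noncomputable def extendFromDarts (y : G.Dart → ℝ) : V → V → ℝ :=
  fun i j => if h : G.Adj i j then y ⟨(i, j), h⟩ else 0

variable {G}

lemma extendFromDarts_of_adj (y : G.Dart → ℝ) {i j : V} (hij : G.Adj i j) :
    extendFromDarts G y i j = y ⟨(i, j), hij⟩ :=
  dif_pos hij

lemma extendFromDarts_nonneg {y : G.Dart → ℝ} (hy : 0 ≤ y) (i j : V) :
    0 ≤ extendFromDarts G y i j := by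
  unfold extendFromDarts
  split_ifs
  exacts [hy _, le_rfl]

lemma extendFromDarts_mono {y y' : G.Dart → ℝ} (hyy : y ≤ y') (i j : V) :
    extendFromDarts G y i j ≤ extendFromDarts G y' i j := by
  unfold extendFromDarts
  split_ifs
  exacts [hyy _, le_rfl]

lemma continuous_extendFromDarts_apply (i j : V) :
    Continuous fun y : G.Dart → ℝ => extendFromDarts G y i j := by
  unfold extendFromDarts
  split_ifs
  exacts [continuous_apply _, continuous_const]

variable (G) [DecidableEq V] [G.LocallyFinite] (μ : V → Finset V → ℝ) (t : ℝ)

/-- `cavStep` on configurations indexed by the oriented edges `Ē = G.Dart`. The entries of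
`x : V → V → ℝ` off the edges are junk, on which `cavStep` need not be antitone. -/
noncomputable def dartStep (y : G.Dart → ℝ) : G.Dart → ℝ :=
  restrictToDarts G (cavStep G μ t (extendFromDarts G y))

lemma semiconj_restrictToDarts_cavStep :
    Function.Semiconj (restrictToDarts G) (cavStep G μ t) (dartStep G μ t) := fun x =>
  funext fun _ => congrArg (t * ·) <| cavOp_congr G μ fun _ hk =>
    (extendFromDarts_of_adj (restrictToDarts G x) hk).symm

variable {μ t}

lemma dartStep_mapsTo (hnn : ∀ i : V, ∀ S ∈ (G.neighborFinset i).powerset, 0 ≤ μ i S)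
    (ht : 0 ≤ t) : Set.MapsTo (dartStep G μ t) (Set.Ici 0) (Set.Ici 0) := fun _ hy d =>
  mul_nonneg ht (cavOp_nonneg G μ (hnn _) d.adj fun k _ => extendFromDarts_nonneg hy k _)

lemma dartStep_antitoneOn (hnn : ∀ i : V, ∀ S ∈ (G.neighborFinset i).powerset, 0 ≤ μ i S)
    (h0 : ∀ i : V, 0 < μ i ∅) (hray : ∀ i : V, lRayleigh (G.neighborFinset i) (μ i))
    (ht : 0 ≤ t) : AntitoneOn (dartStep G μ t) (Set.Ici 0) := fun _ hy _ _ hyy d =>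
  mul_le_mul_of_nonneg_left (cavOp_antitone G μ (hnn _) (h0 _) (hray _) d.adj fun k _ =>
    ⟨extendFromDarts_nonneg hy k _, extendFromDarts_mono hyy k _⟩) ht

lemma dartStep_continuousOn (hnn : ∀ i : V, ∀ S ∈ (G.neighborFinset i).powerset, 0 ≤ μ i S)
    (h0 : ∀ i : V, 0 < μ i ∅) : ContinuousOn (dartStep G μ t) (Set.Ici 0) := by
  refine continuousOn_pi.mpr fun d => continuousOn_const.mul ?_
  have hsub : ∀ S ∈ ((G.neighborFinset d.fst).erase d.snd).powerset,
      S ⊆ G.neighborFinset d.fst := fun S hS => (mem_powerset.mp hS).trans (erase_subset _ _)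
  refine ContinuousOn.div (Continuous.continuousOn ?_) (Continuous.continuousOn ?_)
    fun y hy => (lZ_pos (fun S hS => hnn _ S (mem_powerset.mpr (hsub S hS))) (h0 _)
      fun k _ => extendFromDarts_nonneg hy k _).ne'
  all_goals
    have := fun k => continuous_extendFromDarts_apply (G := G) k d.fst
    fun_prop

end Darts

theorem stmt11_general {V : Type*} [DecidableEq V] (G : SimpleGraph V)
    [G.LocallyFinite] (μ : V → Finset V → ℝ)
    (hnn : ∀ i : V, ∀ S ∈ (G.neighborFinset i).powerset, 0 ≤ μ i S)
    (h0 : ∀ i : V, 0 < μ i ∅)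
    (hray : ∀ i : V, lRayleigh (G.neighborFinset i) (μ i))
    (t : ℝ) (ht : 0 < t) :
    ∃ xm xp : V → V → ℝ,
      (∀ i j, G.Adj i j →
        Monotone (fun k : ℕ => (cavStep G μ t)^[2 * k] (fun _ _ => 0) i j)) ∧
      (∀ i j, G.Adj i j →
        Antitone (fun k : ℕ => (cavStep G μ t)^[2 * k + 1] (fun _ _ => 0) i j)) ∧
      (∀ i j, G.Adj i j →
        Tendsto (fun k : ℕ => (cavStep G μ t)^[2 * k] (fun _ _ => 0) i j) atTop
          (nhds (xm i j))) ∧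
      (∀ i j, G.Adj i j →
        Tendsto (fun k : ℕ => (cavStep G μ t)^[2 * k + 1] (fun _ _ => 0) i j) atTop
          (nhds (xp i j))) ∧
      (∀ i j, G.Adj i j → t * cavOp G μ xm i j = xp i j) ∧
      (∀ i j, G.Adj i j → t * cavOp G μ xp i j = xm i j) ∧
      (∀ x : V → V → ℝ, (∀ i j, 0 ≤ x i j) →
        (∀ i j, G.Adj i j → x i j = t * cavOp G μ x i j) →
        ∀ i j, G.Adj i j → xm i j ≤ x i j ∧ x i j ≤ xp i j) := by
  obtain ⟨ym, yp, hmono, hanti, hm, hp, hmp, hpm, hsand⟩ :=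
    (dartStep_antitoneOn G hnn h0 hray ht.le).exists_tendsto_iterate (dartStep_mapsTo G hnn ht.le)
      isLeast_Ici isClosed_Ici (dartStep_continuousOn G hnn h0)
  have hiter : ∀ n i j (hij : G.Adj i j),
      (cavStep G μ t)^[n] (fun _ _ => 0) i j = (dartStep G μ t)^[n] 0 ⟨(i, j), hij⟩ :=
    fun n i j hij =>
      congrFun ((semiconj_restrictToDarts_cavStep G μ t).iterate_right n (fun _ _ => 0))
        ⟨(i, j), hij⟩
  refine ⟨extendFromDarts G ym, extendFromDarts G yp, fun i j hij => ?_, fun i j hij => ?_,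
    fun i j hij => ?_, fun i j hij => ?_, fun i j hij => ?_, fun i j hij => ?_,
    fun x hx hfix i j hij => ?_⟩
  · exact fun a b hab => by simpa only [hiter _ i j hij] using hmono hab ⟨(i, j), hij⟩
  · exact fun a b hab => by simpa only [hiter _ i j hij] using hanti hab ⟨(i, j), hij⟩
  · simpa only [hiter _ i j hij, extendFromDarts_of_adj _ hij] using
      tendsto_pi_nhds.mp hm ⟨(i, j), hij⟩
  · simpa only [hiter _ i j hij, extendFromDarts_of_adj _ hij] using
      tendsto_pi_nhds.mp hp ⟨(i, j), hij⟩
  · rw [extendFromDarts_of_adj _ hij, ← hmp]; rfl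
  · rw [extendFromDarts_of_adj _ hij, ← hpm]; rfl
  · have hxfix : Function.IsFixedPt (dartStep G μ t) (restrictToDarts G x) := by
      rw [Function.IsFixedPt, ← semiconj_restrictToDarts_cavStep]
      exact funext fun d => (hfix _ _ d.adj).symm
    obtain ⟨hlow, hup⟩ := hsand _ (fun _ => hx _ _) hxfix
    rw [extendFromDarts_of_adj _ hij, extendFromDarts_of_adj _ hij]
    exact ⟨hlow ⟨(i, j), hij⟩, hup ⟨(i, j), hij⟩⟩

/-- on a countable locally finite network with Rayleigh local measures
having `μ_i(∅) > 0`, the even and odd cavity iterates from `0` are respectively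
nondecreasing and nonincreasing, their limits `x⁻(t), x⁺(t)` exist, are swapped by
`tΓ_G`, and sandwich every nonnegative fixed point. -/
theorem stmt11 {V : Type*} [Countable V] [DecidableEq V] (G : SimpleGraph V)
    [G.LocallyFinite] (μ : V → Finset V → ℝ)
    (hnn : ∀ i : V, ∀ S ∈ (G.neighborFinset i).powerset, 0 ≤ μ i S)
    (h0 : ∀ i : V, 0 < μ i ∅)
    (hray : ∀ i : V, lRayleigh (G.neighborFinset i) (μ i))
    (t : ℝ) (ht : 0 < t) :
    ∃ xm xp : V → V → ℝ,
      (∀ i j, G.Adj i j →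
        Monotone (fun k : ℕ => (cavStep G μ t)^[2 * k] (fun _ _ => 0) i j)) ∧
      (∀ i j, G.Adj i j →
        Antitone (fun k : ℕ => (cavStep G μ t)^[2 * k + 1] (fun _ _ => 0) i j)) ∧
      (∀ i j, G.Adj i j →
        Tendsto (fun k : ℕ => (cavStep G μ t)^[2 * k] (fun _ _ => 0) i j) atTop
          (nhds (xm i j))) ∧
      (∀ i j, G.Adj i j →
        Tendsto (fun k : ℕ => (cavStep G μ t)^[2 * k + 1] (fun _ _ => 0) i j) atTop
          (nhds (xp i j))) ∧
      (∀ i j, G.Adj i j → t * cavOp G μ xm i j = xp i j) ∧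
      (∀ i j, G.Adj i j → t * cavOp G μ xp i j = xm i j) ∧
      (∀ x : V → V → ℝ, (∀ i j, 0 ≤ x i j) →
        (∀ i j, G.Adj i j → x i j = t * cavOp G μ x i j) →
        ∀ i j, G.Adj i j → xm i j ≤ x i j ∧ x i j ≤ xp i j) :=
  stmt11_general G μ hnn h0 hray t ht
end

section
/- Let G = (V,E) be a finite cavity-monotone network. Then for every t > 0, the energy satisfies U(G;t) ≤ t · Σ_{ij∈E} A(μ_i)A(μ_j), where for a local measure μ, A(μ) = max μ / min μ with max μ = max{μ(F) : μ(F) > 0} and min μ = min{μ(F) : μ(F) > 0}. -/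
/-!
At fields sending the coordinates in `U` to `∞` and those outside `S` to `0`, the Rayleigh
inequality of a local measure `ν` becomes the exchange inequality for `ν` restricted to the
interval `[U, S]`. With `ν(∅) > 0` this makes the support of `ν` downward closed, so
`ν(S) ≤ A(ν) ν(S ∖ {e})` whenever `e ∈ S`. Deleting an edge `ij` from a spanning subgraph
therefore costs at most a factor `t A(μ_i) A(μ_j)`, i.e. `P(ij ∈ 𝓕) ≤ t A(μ_i) A(μ_j)`, and
`U(G;t) = Σ_{ij} P(ij ∈ 𝓕)`.
-/

open Finset Filter
open scoped Classical ENNReal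

/-- `A(ν) = max ν / min ν`, the ratio of the largest to the smallest positive value of
the local measure `ν` on subsets of the ground set `A`. -/
noncomputable def AM {V : Type*} [DecidableEq V] (A : Finset V) (ν : Finset V → ℝ) : ℝ :=
  sSup (ν '' {S : Finset V | S ⊆ A ∧ 0 < ν S}) /
    sInf (ν '' {S : Finset V | S ⊆ A ∧ 0 < ν S})

section LocalMeasure

variable {V : Type*} {A : Finset V} {ν : Finset V → ℝ}

noncomputable def lZOn (A : Finset V) (ν : Finset V → ℝ) (w : V → ℝ) (p : Finset V → Prop) :
    ℝ :=
  ∑ S ∈ A.powerset with p S, ν S * ∏ k ∈ S, w k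

lemma lZOn_nonneg (hnn : ∀ S ∈ A.powerset, 0 ≤ ν S) {w : V → ℝ} (hw : ∀ k ∈ A, 0 < w k)
    (p : Finset V → Prop) : 0 ≤ lZOn A ν w p :=
  sum_nonneg fun S hS => mul_nonneg (hnn S (mem_filter.mp hS).1)
    (prod_nonneg fun k hk => (hw k (mem_powerset.mp (mem_filter.mp hS).1 hk)).le)

lemma lZOn_and_add_lZOn_and_not (w : V → ℝ) (p q : Finset V → Prop) :
    lZOn A ν w (fun S => p S ∧ q S) + lZOn A ν w (fun S => p S ∧ ¬ q S) = lZOn A ν w p := by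
  rw [lZOn, lZOn, lZOn, ← sum_filter_add_sum_filter_not (A.powerset.filter p) q, filter_filter,
    filter_filter]
  congr

lemma lZ_eq_lZOn_add_lZOn_not [DecidableEq V] (w : V → ℝ) (p : Finset V → Prop) :
    lZ A ν w = lZOn A ν w p + lZOn A ν w (fun S => ¬ p S) := by
  rw [lZ, lZOn, lZOn, sum_filter_add_sum_filter_not]

theorem lRayleigh.exchange [DecidableEq V] (hnn : ∀ S ∈ A.powerset, 0 ≤ ν S)
    (hray : lRayleigh A ν) {w : V → ℝ} (hw : ∀ k ∈ A, 0 < w k) {e f : V} (he : e ∈ A)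
    (hf : f ∈ A) (hef : e ≠ f) :
    lZOn A ν w (fun S => e ∈ S ∧ f ∈ S) * lZOn A ν w (fun S => e ∉ S ∧ f ∉ S) ≤
      lZOn A ν w (fun S => e ∈ S ∧ f ∉ S) * lZOn A ν w (fun S => e ∉ S ∧ f ∈ S) := by
  have hP := hray w hw e he f hf hef
  simp only [lProb] at hP
  rw [← lZOn, ← lZOn, ← lZOn] at hP
  have ha := lZOn_nonneg hnn hw (fun S => e ∈ S ∧ f ∈ S)
  have hb := lZOn_nonneg hnn hw (fun S => e ∉ S ∧ f ∉ S)
  have hc := lZOn_nonneg hnn hw (fun S => e ∈ S ∧ f ∉ S)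
  have hd := lZOn_nonneg hnn hw (fun S => e ∉ S ∧ f ∈ S)
  have hZe := lZOn_and_add_lZOn_and_not (A := A) (ν := ν) w (e ∈ ·) (f ∈ ·)
  have hZf := lZOn_and_add_lZOn_and_not (A := A) (ν := ν) w (f ∈ ·) (e ∈ ·)
  have hZne := lZOn_and_add_lZOn_and_not (A := A) (ν := ν) w (e ∉ ·) (f ∈ ·)
  have hZ := lZ_eq_lZOn_add_lZOn_not (A := A) (ν := ν) w (e ∈ ·)
  simp only [and_comm (a := f ∈ _)] at hZf
  rw [← hZe, ← hZf] at hP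
  rw [← hZe, ← hZne] at hZ
  rcases (show 0 ≤ lZ A ν w by linarith).eq_or_lt with hZ0 | hZ0
  · nlinarith
  · rw [div_mul_div_comm, div_le_div_iff₀ hZ0 (by positivity), ← mul_assoc,
      mul_le_mul_iff_left₀ hZ0] at hP
    nlinarith

end LocalMeasure

section Interval

variable {V : Type*} [DecidableEq V] {A : Finset V} {ν : Finset V → ℝ}

/-- As `x → 0⁺` this field forces the elements of `U` in and those outside `S` out. -/
noncomputable def intervalField (U S : Finset V) (x : ℝ) (k : V) : ℝ :=
  if k ∈ U then x⁻¹ else if k ∈ S then 1 else x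

lemma pow_card_mul_prod_intervalField {U S : Finset V} (hUS : U ⊆ S) {x : ℝ} (hx : x ≠ 0)
    (X : Finset V) :
    x ^ U.card * ∏ k ∈ X, intervalField U S x k = x ^ ((U \ X).card + (X \ S).card) := by
  have hout : {k ∈ X | k ∉ U ∧ k ∉ S} = X \ S := by
    ext k; simp only [mem_filter]; grind
  simp only [intervalField, prod_ite, prod_const_one, prod_const, filter_filter, one_mul, hout,
    filter_mem_eq_inter, inter_comm X U]
  rw [← card_sdiff_add_card_inter U X, pow_add, pow_add, inv_pow]
  field_simp

theorem lRayleigh.interval_exchange (hnn : ∀ S ∈ A.powerset, 0 ≤ ν S) (hray : lRayleigh A ν)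
    {U S : Finset V} (hUS : U ⊆ S) (hSA : S ⊆ A) {e f : V} (he : e ∈ A) (hf : f ∈ A)
    (hef : e ≠ f) :
    (∑ X ∈ Icc U S with e ∈ X ∧ f ∈ X, ν X) * (∑ X ∈ Icc U S with e ∉ X ∧ f ∉ X, ν X) ≤
      (∑ X ∈ Icc U S with e ∈ X ∧ f ∉ X, ν X) * (∑ X ∈ Icc U S with e ∉ X ∧ f ∈ X, ν X) := by
  let g (p : Finset V → Prop) (x : ℝ) : ℝ :=
    ∑ X ∈ A.powerset with p X, ν X * x ^ ((U \ X).card + (X \ S).card)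
  have hg_cont (p : Finset V → Prop) : Continuous (g p) := by fun_prop
  have hg_zero (p : Finset V → Prop) [DecidablePred p] :
      g p 0 = ∑ X ∈ Icc U S with p X, ν X := by
    simp only [g, zero_pow_eq, mul_ite, mul_one, mul_zero, ← sum_filter, filter_filter]
    congr 1
    ext X
    simp only [mem_filter, mem_powerset, mem_Icc, Nat.add_eq_zero_iff, card_eq_zero,
      sdiff_eq_empty_iff_subset]
    constructor
    · rintro ⟨-, hp, hUX, hXS⟩
      exact ⟨⟨hUX, hXS⟩, hp⟩
    · rintro ⟨⟨hUX, hXS⟩, hp⟩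
      exact ⟨hXS.trans hSA, hp, hUX, hXS⟩
  have hg_eq {x : ℝ} (hx : 0 < x) (p : Finset V → Prop) :
      g p x = x ^ U.card * lZOn A ν (intervalField U S x) p := by
    simp only [g, lZOn, mul_sum, mul_left_comm (x ^ U.card),
      pow_card_mul_prod_intervalField hUS hx.ne']
  have hfield {x : ℝ} (hx : 0 < x) (k : V) : 0 < intervalField U S x k := by
    unfold intervalField; split_ifs <;> positivity
  have hlim (p q : Finset V → Prop) :
      Filter.Tendsto (fun x => g p x * g q x) (nhdsWithin 0 (Set.Ioi 0))
        (nhds (g p 0 * g q 0)) :=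
    (((hg_cont p).mul (hg_cont q)).tendsto 0).mono_left nhdsWithin_le_nhds
  simp only [← hg_zero]
  refine le_of_tendsto_of_tendsto (hlim _ _) (hlim _ _) ?_
  filter_upwards [self_mem_nhdsWithin] with x (hx : 0 < x)
  rw [hg_eq hx, hg_eq hx, hg_eq hx, hg_eq hx, mul_mul_mul_comm, mul_mul_mul_comm _ (lZOn _ _ _ _)]
  exact mul_le_mul_of_nonneg_left
    (hray.exchange hnn (fun k _ => hfield hx k) he hf hef) (by positivity)

end Interval

section Support

variable {V : Type*} [DecidableEq V] {A : Finset V} {ν : Finset V → ℝ}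

/-- If `U ⊊ S` both carry mass, the exchange inequality for `e, f ∈ S \ U` produces a set
strictly between them, containing `f` but not `e`, that carries mass; induct from there. -/
theorem lRayleigh.erase_pos_of_subset (hnn : ∀ S ∈ A.powerset, 0 ≤ ν S)
    (hray : lRayleigh A ν) {S U : Finset V} (hSA : S ⊆ A) (hUS : U ⊆ S) (hS : 0 < ν S)
    (hU : 0 < ν U) {e : V} (he : e ∈ S \ U) : 0 < ν (S.erase e) := by
  induction hn : (S \ U).card using Nat.strong_induction_on generalizing U with
  | _ n ih =>
    rcases le_or_gt (S \ U).card 1 with hcard | hcard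
    · have hsingle : S \ U = {e} :=
        eq_singleton_iff_unique_mem.mpr ⟨he, fun x hx => card_le_one.mp hcard x hx e he⟩
      rwa [erase_eq, ← hsingle, Finset.sdiff_sdiff_eq_self hUS]
    obtain ⟨f, hf, hfe⟩ := exists_mem_ne hcard e
    have hνIcc : ∀ X ∈ Icc U S, 0 ≤ ν X := fun X hX =>
      hnn X (mem_powerset.mpr ((mem_Icc.mp hX).2.trans hSA))
    have hboth : ν S ≤ ∑ X ∈ Icc U S with e ∈ X ∧ f ∈ X, ν X :=
      single_le_sum (fun X hX => hνIcc X (mem_filter.mp hX).1)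
        (mem_filter.mpr ⟨mem_Icc.mpr ⟨hUS, le_rfl⟩, (mem_sdiff.mp he).1, (mem_sdiff.mp hf).1⟩)
    have hneither : ν U ≤ ∑ X ∈ Icc U S with e ∉ X ∧ f ∉ X, ν X :=
      single_le_sum (fun X hX => hνIcc X (mem_filter.mp hX).1)
        (mem_filter.mpr ⟨mem_Icc.mpr ⟨le_rfl, hUS⟩, (mem_sdiff.mp he).2, (mem_sdiff.mp hf).2⟩)
    have hexch := hray.interval_exchange hnn hUS hSA (hSA (mem_sdiff.mp he).1)
      (hSA (mem_sdiff.mp hf).1) hfe.symm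
    obtain ⟨X, hX, ⟨heX, hfX⟩, hXpos⟩ : ∃ X ∈ Icc U S, (e ∉ X ∧ f ∈ X) ∧ 0 < ν X := by
      by_contra! hnone
      have hout_in : ∑ X ∈ Icc U S with e ∉ X ∧ f ∈ X, ν X ≤ 0 :=
        sum_nonpos fun X hX => hnone X (mem_filter.mp hX).1 (mem_filter.mp hX).2
      have hin_out : 0 ≤ ∑ X ∈ Icc U S with e ∈ X ∧ f ∉ X, ν X :=
        sum_nonneg fun X hX => hνIcc X (mem_filter.mp hX).1
      linarith [mul_le_mul hboth hneither hU.le (hS.le.trans hboth), mul_pos hS hU,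
        mul_nonpos_of_nonneg_of_nonpos hin_out hout_in]
    obtain ⟨hUX, hXS⟩ := mem_Icc.mp hX
    refine ih (S \ X).card ?_ hXS hXpos (mem_sdiff.mpr ⟨(mem_sdiff.mp he).1, heX⟩) rfl
    rw [← hn]
    exact card_lt_card ((ssubset_iff_of_subset (sdiff_subset_sdiff le_rfl hUX)).mpr
      ⟨f, hf, fun h => (mem_sdiff.mp h).2 hfX⟩)

theorem lRayleigh.erase_pos (hnn : ∀ S ∈ A.powerset, 0 ≤ ν S) (h0 : 0 < ν ∅)
    (hray : lRayleigh A ν) {S : Finset V} (hSA : S ⊆ A) (hS : 0 < ν S) {e : V} (he : e ∈ S) :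
    0 < ν (S.erase e) :=
  hray.erase_pos_of_subset hnn hSA (empty_subset S) hS h0 (by simpa using he)

lemma AM_nonneg (A : Finset V) (ν : Finset V → ℝ) : 0 ≤ AM A ν := by
  have hpos : ∀ x ∈ ν '' {S : Finset V | S ⊆ A ∧ 0 < ν S}, 0 ≤ x := by
    rintro _ ⟨S, hS, rfl⟩
    exact hS.2.le
  exact div_nonneg (Real.sSup_nonneg hpos) (Real.sInf_nonneg hpos)

theorem lRayleigh.le_AM_mul_erase (hnn : ∀ S ∈ A.powerset, 0 ≤ ν S) (h0 : 0 < ν ∅)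
    (hray : lRayleigh A ν) {S : Finset V} (hSA : S ⊆ A) {e : V} (he : e ∈ S) :
    ν S ≤ AM A ν * ν (S.erase e) := by
  have hSeA : S.erase e ⊆ A := (erase_subset e S).trans hSA
  rcases (hnn S (mem_powerset.mpr hSA)).eq_or_lt with hS | hS
  · rw [← hS]
    exact mul_nonneg (AM_nonneg A ν) (hnn _ (mem_powerset.mpr hSeA))
  set P := ν '' {S : Finset V | S ⊆ A ∧ 0 < ν S}
  have hPfin : P.Finite :=
    ((A.powerset : Set (Finset V)).toFinite.subset fun X hX => by simpa using hX.1).image ν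
  have hSe : ν (S.erase e) ∈ P := ⟨S.erase e, ⟨hSeA, hray.erase_pos hnn h0 hSA hS he⟩, rfl⟩
  have hinf_pos : 0 < sInf P := by
    obtain ⟨X, hX, hXeq⟩ := Set.Nonempty.csInf_mem ⟨_, hSe⟩ hPfin
    exact hXeq ▸ hX.2
  calc ν S ≤ sSup P := le_csSup hPfin.bddAbove ⟨S, ⟨hSA, hS⟩, rfl⟩
    _ = AM A ν * sInf P := (div_mul_cancel₀ _ hinf_pos.ne').symm
    _ ≤ AM A ν * ν (S.erase e) :=
      mul_le_mul_of_nonneg_left (csInf_le hPfin.bddBelow hSe) (AM_nonneg A ν)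

end Support

lemma sum_powerset_card_mul {α R : Type*} [DecidableEq α] [NonAssocSemiring R] (s : Finset α)
    (g : Finset α → R) :
    ∑ F ∈ s.powerset, (F.card : R) * g F = ∑ e ∈ s, ∑ F ∈ s.powerset with e ∈ F, g F := by
  simp only [sum_filter]
  rw [sum_comm]
  refine sum_congr rfl fun F hF => ?_
  rw [sum_ite_mem, inter_eq_right.mpr (mem_powerset.mp hF), sum_const, nsmul_eq_mul]

section Network

variable {V : Type*} [Fintype V] [DecidableEq V] (G : SimpleGraph V) [DecidableRel G.Adj]
  {μ : V → Finset V → ℝ}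

lemma nbrsIn_subset (F : Finset (Sym2 V)) (i : V) : nbrsIn G F i ⊆ G.neighborFinset i :=
  filter_subset _ _

lemma nbrsIn_erase_self (F : Finset (Sym2 V)) (i j : V) :
    nbrsIn G (F.erase s(i, j)) i = (nbrsIn G F i).erase j := by
  ext k
  simp only [nbrsIn, mem_filter, mem_erase, ne_eq, Sym2.congr_right]
  tauto

lemma nbrsIn_erase_of_ne (F : Finset (Sym2 V)) {i j v : V} (hvi : v ≠ i) (hvj : v ≠ j) :
    nbrsIn G (F.erase s(i, j)) v = nbrsIn G F v := by
  ext k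
  simp only [nbrsIn, mem_filter, mem_erase, ne_eq, Sym2.eq_iff]
  tauto

lemma gWeight_nonneg (hnn : ∀ i, ∀ S ∈ (G.neighborFinset i).powerset, 0 ≤ μ i S)
    (F : Finset (Sym2 V)) : 0 ≤ gWeight G μ F :=
  prod_nonneg fun i _ => hnn i _ (mem_powerset.mpr (nbrsIn_subset G F i))

lemma ZG_pos (hnn : ∀ i, ∀ S ∈ (G.neighborFinset i).powerset, 0 ≤ μ i S)
    (h0 : ∀ i, 0 < μ i ∅) {t : ℝ} (ht : 0 < t) : 0 < ZG G μ t := by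
  have hempty : 0 < gWeight G μ ∅ * t ^ (∅ : Finset (Sym2 V)).card := by
    simpa [gWeight, nbrsIn] using prod_pos fun i _ => h0 i
  exact hempty.trans_le (single_le_sum (f := fun F => gWeight G μ F * t ^ F.card)
    (fun F _ => mul_nonneg (gWeight_nonneg G hnn F) (by positivity)) (empty_mem_powerset _))

/-- Removing the edge `ij` from `F` changes only the local configurations at `i` and `j`,
each by one element, so the cost is at most `A(μ_i) A(μ_j)`. -/
theorem gWeight_le_mul_gWeight_erase
    (hnn : ∀ i, ∀ S ∈ (G.neighborFinset i).powerset, 0 ≤ μ i S)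
    (h0 : ∀ i, 0 < μ i ∅) (hray : ∀ i, lRayleigh (G.neighborFinset i) (μ i))
    {F : Finset (Sym2 V)} {i j : V} (hij : G.Adj i j) (hF : s(i, j) ∈ F) :
    gWeight G μ F ≤ (AM (G.neighborFinset i) (μ i) * AM (G.neighborFinset j) (μ j)) *
      gWeight G μ (F.erase s(i, j)) := by
  let c (v : V) : ℝ := (if v = i then AM (G.neighborFinset i) (μ i) else 1) *
    (if v = j then AM (G.neighborFinset j) (μ j) else 1)
  have hlocal (v : V) : μ v (nbrsIn G F v) ≤ c v * μ v (nbrsIn G (F.erase s(i, j)) v) := by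
    by_cases hvi : v = i
    · rw [hvi, nbrsIn_erase_self]
      have hjF : j ∈ nbrsIn G F i := by simpa [nbrsIn] using ⟨hij, hF⟩
      simpa [c, hij.ne] using
        (hray i).le_AM_mul_erase (hnn i) (h0 i) (nbrsIn_subset G F i) hjF
    by_cases hvj : v = j
    · rw [hvj, Sym2.eq_swap, nbrsIn_erase_self]
      have hiF : i ∈ nbrsIn G F j := by simpa [nbrsIn, Sym2.eq_swap] using ⟨hij.symm, hF⟩
      simpa [c, hij.ne'] using
        (hray j).le_AM_mul_erase (hnn j) (h0 j) (nbrsIn_subset G F j) hiF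
    · simp [c, hvi, hvj, nbrsIn_erase_of_ne G F hvi hvj]
  calc gWeight G μ F ≤ ∏ v, c v * μ v (nbrsIn G (F.erase s(i, j)) v) :=
        prod_le_prod (fun v _ => hnn v _ (mem_powerset.mpr (nbrsIn_subset G F v)))
          fun v _ => hlocal v
    _ = _ := by simp only [c, prod_mul_distrib, prod_ite_eq', mem_univ, if_true, gWeight]

theorem sum_gWeight_mem_le (hnn : ∀ i, ∀ S ∈ (G.neighborFinset i).powerset, 0 ≤ μ i S)
    (h0 : ∀ i, 0 < μ i ∅) (hray : ∀ i, lRayleigh (G.neighborFinset i) (μ i))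
    {t : ℝ} (ht : 0 < t) {i j : V} (hij : G.Adj i j) :
    ∑ F ∈ G.edgeFinset.powerset with s(i, j) ∈ F, gWeight G μ F * t ^ F.card ≤
      t * (AM (G.neighborFinset i) (μ i) * AM (G.neighborFinset j) (μ j)) * ZG G μ t := by
  set a := AM (G.neighborFinset i) (μ i) * AM (G.neighborFinset j) (μ j)
  have ha : 0 ≤ a := mul_nonneg (AM_nonneg _ _) (AM_nonneg _ _)
  have hterm : ∀ F ∈ G.edgeFinset.powerset.filter (s(i, j) ∈ ·), gWeight G μ F * t ^ F.card ≤
      t * a * (gWeight G μ (F.erase s(i, j)) * t ^ (F.erase s(i, j)).card) := by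
    intro F hF
    have hmem := (mem_filter.mp hF).2
    rw [← card_erase_add_one hmem, pow_succ]
    calc gWeight G μ F * (t ^ (F.erase s(i, j)).card * t)
        ≤ (a * gWeight G μ (F.erase s(i, j))) * (t ^ (F.erase s(i, j)).card * t) :=
          mul_le_mul_of_nonneg_right (gWeight_le_mul_gWeight_erase G hnn h0 hray hij hmem)
            (by positivity)
      _ = _ := by ring
  have himage : (G.edgeFinset.powerset.filter (s(i, j) ∈ ·)).image (·.erase s(i, j)) ⊆
      G.edgeFinset.powerset := by
    simp only [subset_iff, mem_image, mem_filter, mem_powerset]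
    rintro _ ⟨F, ⟨hFE, -⟩, rfl⟩
    exact (erase_subset _ _).trans hFE
  calc _ ≤ ∑ F ∈ G.edgeFinset.powerset with s(i, j) ∈ F,
        t * a * (gWeight G μ (F.erase s(i, j)) * t ^ (F.erase s(i, j)).card) := sum_le_sum hterm
    _ = t * a * ∑ F ∈ (G.edgeFinset.powerset.filter (s(i, j) ∈ ·)).image (·.erase s(i, j)),
        gWeight G μ F * t ^ F.card := by
      rw [sum_image, mul_sum]
      exact fun F hF F' hF' => erase_injOn' s(i, j) (mem_filter.mp hF).2 (mem_filter.mp hF').2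
    _ ≤ t * a * ZG G μ t := by
      refine mul_le_mul_of_nonneg_left (sum_le_sum_of_subset_of_nonneg himage fun F _ _ => ?_)
        (by positivity)
      exact mul_nonneg (gWeight_nonneg G hnn F) (by positivity)

end Network

/-- on a finite cavity-monotone network,
`U(G;t) ≤ t Σ_{ij∈E} A(μ_i)A(μ_j)` for every `t > 0`. -/
theorem stmt14 {V : Type*} [Fintype V] [DecidableEq V] (G : SimpleGraph V)
    [DecidableRel G.Adj] (μ : V → Finset V → ℝ)
    (hcm : ∀ i : V, lCavityMonotone (G.neighborFinset i) (μ i))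
    (t : ℝ) (ht : 0 < t) :
    UG G μ t ≤ t * ∑ e ∈ G.edgeFinset,
      Sym2.lift ⟨fun i j => AM (G.neighborFinset i) (μ i) * AM (G.neighborFinset j) (μ j),
        fun _ _ => mul_comm _ _⟩ e := by
  have hnn i := (hcm i).1
  have h0 i := (hcm i).2.1
  have hray i := (hcm i).2.2.1
  rw [UG, div_le_iff₀ (ZG_pos G hnn h0 ht), mul_sum, sum_mul]
  simp only [mul_assoc (_ : ℝ) (gWeight G μ _)]
  rw [sum_powerset_card_mul]
  refine sum_le_sum fun e he => ?_
  induction e using Sym2.ind with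
  | h i j => simpa [mul_assoc] using sum_gWeight_mem_le G hnn h0 hray ht (G.mem_edgeFinset.mp he)
end

section
/- Fix an integer b ≥ 1 and n ∈ ℕ. For every x = (x₁,…,xₙ) ∈ [0,1]^n, the limit Γ̄(x₁,…,xₙ) := lim_{t→∞} t·Γ(tx₁,…,txₙ) exists in [0,∞]; it equals ∞ if and only if #{i : x_i > 0} < b, and if #{i : x_i > 0} ≥ b then Γ̄(x₁,…,xₙ) = (Σ_{I⊆[n], |I|=b−1} ∏_{i∈I} x_i) / (Σ_{I⊆[n], |I|=b} ∏_{i∈I} x_i). -/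
/-!
Grouping the subsets by size gives `Σ_{|I| ≤ c} ∏_{i∈I} t x_i = Σ_{k ≤ c} e_k(x) t^k`, a polynomial
in `t` whose coefficients are the elementary symmetric sums `e_k(x)`; for `x ≥ 0`, `e_k(x) > 0`
exactly when `k ≤ #{i : x_i > 0}`. If `e_b(x) > 0`, then `t^{1-b}` times the numerator and `t^{-b}`
times the denominator of `Γ(tx)` tend to their leading coefficients, so `t Γ(tx) → e_{b-1}/e_b`.
If `e_b(x) = 0`, numerator and denominator coincide, so `t Γ(tx) = t → ∞`.
-/

open Finset Filter
open scoped Classical ENNReal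

/-- The `b`-matching cavity ratio
`Γ(x) = (Σ_{|I| ≤ b−1} ∏_{i∈I} x_i) / (Σ_{|I| ≤ b} ∏_{i∈I} x_i)`
(the term for `I = ∅` equals `1`, so the denominator is positive for nonnegative `x`). -/
noncomputable def bGamma (b : ℕ) {ι : Type*} [Fintype ι] [DecidableEq ι] (x : ι → ℝ) : ℝ :=
  (∑ I ∈ Finset.univ.filter (fun I : Finset ι => I.card ≤ b - 1), ∏ i ∈ I, x i) /
  (∑ I ∈ Finset.univ.filter (fun I : Finset ι => I.card ≤ b), ∏ i ∈ I, x i)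

noncomputable def elemSymm {ι R : Type*} [Fintype ι] [CommSemiring R] (x : ι → R) (k : ℕ) : R :=
  ∑ I ∈ univ.filter (fun I : Finset ι => I.card = k), ∏ i ∈ I, x i

section ElemSymm

variable {ι R : Type*} [Fintype ι]

theorem sum_card_le_prod_mul_eq_sum_elemSymm [CommSemiring R] (x : ι → R) (c : ℕ) (t : R) :
    ∑ I ∈ univ.filter (fun I : Finset ι => I.card ≤ c), ∏ i ∈ I, t * x i
      = ∑ k ∈ range (c + 1), elemSymm x k * t ^ k := by
  rw [← sum_fiberwise_of_maps_to (t := range (c + 1)) (g := card)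
    (fun I hI => by simp only [mem_filter, mem_range] at hI ⊢; omega)]
  refine sum_congr rfl fun k hk => ?_
  have hk : k ≤ c := Nat.lt_succ_iff.mp (mem_range.mp hk)
  rw [elemSymm, filter_filter, sum_mul]
  refine sum_congr (filter_congr fun I _ => ⟨And.right, fun h => ⟨h ▸ hk, h⟩⟩) fun I hI => ?_
  rw [prod_mul_distrib, prod_const, (mem_filter.mp hI).2, mul_comm]

variable [CommSemiring R] [LinearOrder R] {x : ι → R}

theorem elemSymm_eq_zero (hx : ∀ i, 0 ≤ x i) {k : ℕ}
    (hk : (univ.filter (fun i => 0 < x i)).card < k) : elemSymm x k = 0 := by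
  refine sum_eq_zero fun I hI => ?_
  obtain ⟨i, hiI, hi⟩ : ∃ i ∈ I, ¬ 0 < x i := by
    by_contra! h
    have := card_le_card fun i hi => mem_filter.mpr ⟨mem_univ i, h i hi⟩
    have := (mem_filter.mp hI).2
    omega
  exact prod_eq_zero hiI ((hx i).eq_of_not_lt hi).symm

variable [IsStrictOrderedRing R]

theorem sum_card_le_prod_pos (hx : ∀ i, 0 ≤ x i) (c : ℕ) :
    0 < ∑ I ∈ univ.filter (fun I : Finset ι => I.card ≤ c), ∏ i ∈ I, x i :=
  sum_pos' (fun I _ => prod_nonneg fun i _ => hx i) ⟨∅, by simp, by simp⟩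

theorem elemSymm_pos (hx : ∀ i, 0 ≤ x i) {k : ℕ}
    (hk : k ≤ (univ.filter (fun i => 0 < x i)).card) : 0 < elemSymm x k := by
  obtain ⟨J, hJ, rfl⟩ := exists_subset_card_eq hk
  refine sum_pos' (fun I _ => prod_nonneg fun i _ => hx i) ⟨J, by simp, ?_⟩
  exact prod_pos fun i hi => (mem_filter.mp (hJ hi)).2

end ElemSymm

theorem tendsto_sum_range_mul_pow_div_pow {𝕜 : Type*} [Field 𝕜] [LinearOrder 𝕜]
    [IsStrictOrderedRing 𝕜] [TopologicalSpace 𝕜] [OrderTopology 𝕜] (a : ℕ → 𝕜) (d : ℕ) :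
    Tendsto (fun t : 𝕜 => (∑ k ∈ range (d + 1), a k * t ^ k) / t ^ d) atTop (nhds (a d)) := by
  have hlower : Tendsto (fun t : 𝕜 => ∑ k ∈ range d, a k * (t ^ k / t ^ d)) atTop (nhds 0) := by
    simpa using tendsto_finsetSum (range d) fun k hk =>
      (tendsto_pow_div_pow_atTop_zero (mem_range.mp hk)).const_mul (a k)
  refine (zero_add (a d) ▸ hlower.add_const (a d)).congr' ?_
  filter_upwards [eventually_ne_atTop 0] with t ht
  rw [sum_range_succ, add_div, sum_div, mul_div_cancel_right₀ _ (pow_ne_zero d ht)]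
  simp only [mul_div_assoc]

section CavityRatio

variable {ι : Type*} [Fintype ι] [DecidableEq ι] {b : ℕ} (x : ι → ℝ)

theorem tendsto_mul_bGamma_mul_of_elemSymm_ne_zero (hb : 1 ≤ b) (hxb : elemSymm x b ≠ 0) :
    Tendsto (fun t : ℝ => t * bGamma b (fun i => t * x i)) atTop
      (nhds (elemSymm x (b - 1) / elemSymm x b)) := by
  obtain ⟨c, rfl⟩ := Nat.exists_eq_add_of_le' hb
  rw [Nat.add_sub_cancel]
  refine ((tendsto_sum_range_mul_pow_div_pow (elemSymm x) c).div
    (tendsto_sum_range_mul_pow_div_pow (elemSymm x) (c + 1)) hxb).congr' ?_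
  filter_upwards [eventually_ne_atTop 0] with t ht
  rw [Pi.div_apply, bGamma, Nat.add_sub_cancel, sum_card_le_prod_mul_eq_sum_elemSymm,
    sum_card_le_prod_mul_eq_sum_elemSymm, pow_succ]
  field_simp

theorem tendsto_mul_bGamma_mul_atTop_of_elemSymm_eq_zero (hb : 1 ≤ b) (hxb : elemSymm x b = 0)
    (hx : ∀ i, 0 ≤ x i) :
    Tendsto (fun t : ℝ => t * bGamma b (fun i => t * x i)) atTop atTop := by
  obtain ⟨c, rfl⟩ := Nat.exists_eq_add_of_le' hb
  refine tendsto_id.congr' ?_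
  filter_upwards [eventually_ge_atTop 0] with t ht
  have hnum_pos := sum_card_le_prod_pos (fun i => mul_nonneg ht (hx i)) c
  rw [sum_card_le_prod_mul_eq_sum_elemSymm] at hnum_pos
  rw [bGamma, Nat.add_sub_cancel, sum_card_le_prod_mul_eq_sum_elemSymm,
    sum_card_le_prod_mul_eq_sum_elemSymm, sum_range_succ _ (c + 1), hxb, zero_mul, add_zero,
    div_self hnum_pos.ne', mul_one, id]

end CavityRatio

/-- for `x ∈ [0,1]^n`, the limit `Γ̄(x) = lim_{t→∞} t Γ(tx)` exists in
`[0,∞]`; it is infinite iff `#{i : x_i > 0} < b`, and otherwise equals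
`(Σ_{|I| = b−1} ∏_{i∈I} x_i) / (Σ_{|I| = b} ∏_{i∈I} x_i)`. -/
theorem stmt18 (b : ℕ) (hb : 1 ≤ b) (n : ℕ) (x : Fin n → ℝ)
    (hx : ∀ i, x i ∈ Set.Icc (0 : ℝ) 1) :
    ∃ L : ℝ≥0∞,
      Tendsto (fun t : ℝ => ENNReal.ofReal (t * bGamma b (fun i => t * x i))) atTop
        (nhds L) ∧
      (L = ⊤ ↔ (Finset.univ.filter (fun i => 0 < x i)).card < b) ∧
      (b ≤ (Finset.univ.filter (fun i => 0 < x i)).card →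
        L = ENNReal.ofReal
          ((∑ I ∈ Finset.univ.filter (fun I : Finset (Fin n) => I.card = b - 1),
              ∏ i ∈ I, x i) /
            (∑ I ∈ Finset.univ.filter (fun I : Finset (Fin n) => I.card = b),
              ∏ i ∈ I, x i))) := by
  have hx₀ i : 0 ≤ x i := (hx i).1
  by_cases hlt : (univ.filter (fun i => 0 < x i)).card < b
  · refine ⟨⊤, ?_, iff_of_true rfl hlt, fun hle => absurd hle (not_le.mpr hlt)⟩
    exact ENNReal.tendsto_ofReal_atTop.comp
      (tendsto_mul_bGamma_mul_atTop_of_elemSymm_eq_zero x hb (elemSymm_eq_zero hx₀ hlt) hx₀)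
  · have hle := not_lt.mp hlt
    refine ⟨ENNReal.ofReal (elemSymm x (b - 1) / elemSymm x b), ?_,
      iff_of_false ENNReal.ofReal_ne_top hlt, fun _ => rfl⟩
    exact (ENNReal.continuous_ofReal.tendsto _).comp
      (tendsto_mul_bGamma_mul_of_elemSymm_ne_zero x hb (elemSymm_pos hx₀ hle).ne')
end
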